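/- Let D be a delta-matroid on [n] and let M be an enveloping matroid for D. Then an admissible set S on [n] is independent in the matroid M (i.e., the subset S⁺×{+} ∪ S⁻×{−} of the ground set [n]×{+,−} is independent in M) if and only if S is independent in D. -/

import Mathlib

open Finset
open scoped symmDiff

/-- The rank-type function of a nonempty family `G` of subsets of `Fin n`, evaluated on an
admissible set `(Sp, Sn)`: `max_{F ∈ G} (|Sp ∩ F| + |Sn \ F| − |Sn ∩ F| − |Sp \ F|)`.
(Junk value `0` when the family is empty.) -/
noncomputable def gFam {n : ℕ} (G : Finset (Finset (Fin n))) (Sp Sn : Finset (Fin n)) : ℤ :=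
  if h : G.Nonempty then
    G.sup' h fun F => ((Sp ∩ F).card : ℤ) + ((Sn \ F).card : ℤ)
      - ((Sn ∩ F).card : ℤ) - ((Sp \ F).card : ℤ)
  else 0

/-- A delta-matroid on `[n]`: a nonempty family of subsets of `Fin n` (each `F` encoding the
size-`n` admissible set `(F, [n] \ F)`), satisfying the symmetric exchange axiom. -/
structure DeltaMatroid (n : ℕ) where
  feas : Finset (Finset (Fin n))
  nonempty : feas.Nonempty
  exchange : ∀ F₁ ∈ feas, ∀ F₂ ∈ feas, ∀ x ∈ F₁ ∆ F₂, ∃ y ∈ F₁ ∆ F₂, F₁ ∆ {x, y} ∈ feas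

/-- The rank function `g_D` of a delta-matroid, on admissible sets `(Sp, Sn)`. -/
noncomputable def DeltaMatroid.g {n : ℕ} (D : DeltaMatroid n) :
    Finset (Fin n) → Finset (Fin n) → ℤ :=
  gFam D.feas

/-- The linear map `env : ℝ^([n]×{+,−}) → ℝ^n`, `env(x)_i = x_{(i,+)} − x_{(i,−)}`,
with `+` encoded as `true` and `−` as `false`. -/
def envMap {n : ℕ} (x : Fin n × Bool → ℝ) : Fin n → ℝ := fun i => x (i, true) - x (i, false)

/-- The polytope `P(D) ⊆ ℝ^n` of a delta-matroid: the convex hull of the points `e_F`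
for `F` feasible, where `(e_F)_i = 1` if `i ∈ F` and `−1` otherwise. -/
noncomputable def deltaPolytope {n : ℕ} (D : DeltaMatroid n) : Set (Fin n → ℝ) :=
  convexHull ℝ ((fun F : Finset (Fin n) => fun i => if i ∈ F then (1 : ℝ) else -1) '' ↑D.feas)

/-- A matroid `M` on `[n]×{+,−}` is an enveloping matroid for the delta-matroid `D` if its
ground set is everything and `env(P(M)) = P(D)`, where `P(M)` is the convex hull of the 0/1
indicator vectors of the bases of `M`. -/
noncomputable def IsEnveloping {n : ℕ} (M : Matroid (Fin n × Bool)) (D : DeltaMatroid n) : Prop :=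
  M.E = Set.univ ∧
    envMap '' (convexHull ℝ
        {x : Fin n × Bool → ℝ | ∃ B, M.IsBase B ∧ x = B.indicator fun _ => (1 : ℝ)})
      = deltaPolytope D

/-!
For a signed set `X`, the linear functional `ψ_X y = ∑_{i ∈ X⁺} y i - ∑_{i ∈ X⁻} y i` takes the
value `|B ∩ X| - |B ∩ X̄|` at `env 1_B` and the value `|X| - 2 |X ∖ F̂|` at `e_F = env 1_F̂`, where
`F̂ = F×{+} ∪ ([n] ∖ F)×{−}`. As `env(P(M)) = P(D)`, both families of values have the same maximum.
If `X ⊆ F̂` for a feasible `F`, the maximum `|X|` is attained at some base `B`, which must contain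
`X`. Conversely, let `X` be independent and `x ∈ X`; by induction some base `B'` contains
`X ∖ {x}` and avoids its flip. Extending `X` to a base inside `X ∪ B'` gives the value at least
`|X| - 1`, and since the values `|X| - 2 |X ∖ F̂|` have the parity of `|X|`, some feasible `F`
has `X ⊆ F̂`.
-/

section SignedGroundSet

open scoped Classical

variable {α : Type*}

/-- The involution `i ↦ ī` of the signed ground set. -/
def flipSign (a : α × Bool) : α × Bool := (a.1, !a.2)

def signedSet [DecidableEq α] (P N : Finset α) : Finset (α × Bool) := P ×ˢ {true} ∪ N ×ˢ {false}

/-- The size-`n` admissible set `(F, [n] ∖ F)` encoded by `F`. -/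
def transversal (F : Finset α) : Set (α × Bool) := {a | a.2 = decide (a.1 ∈ F)}

/-- The value of `signedSum X ∘ env` at the indicator vector of `Y`
(see `signedSum_envMap_indicator`). -/
noncomputable def signedCount (X : Finset (α × Bool)) (Y : Set (α × Bool)) : ℤ :=
  #{a ∈ X | a ∈ Y} - #{a ∈ X | flipSign a ∈ Y}

lemma coe_signedSet [DecidableEq α] (P N : Finset α) :
    (↑(signedSet P N) : Set (α × Bool)) = (↑P : Set α) ×ˢ {true} ∪ (↑N : Set α) ×ˢ {false} := by
  rw [signedSet, coe_union, coe_product, coe_product, coe_singleton, coe_singleton]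

lemma flipSign_notMem_signedSet [DecidableEq α] {P N : Finset α} (hPN : Disjoint P N) :
    ∀ a ∈ signedSet P N, flipSign a ∉ signedSet P N := by
  rintro ⟨i, b⟩ ha
  cases b <;> simp only [signedSet, flipSign, mem_union, mem_product, mem_singleton] at ha ⊢
  · simpa using fun hi => disjoint_left.1 hPN hi (by simpa using ha)
  · simpa using disjoint_left.1 hPN (by simpa using ha)

lemma coe_signedSet_subset_transversal_iff [DecidableEq α] {P N F : Finset α} :
    ↑(signedSet P N) ⊆ transversal F ↔ P ⊆ F ∧ Disjoint N F := by
  simp [signedSet, transversal, Set.subset_def, Finset.subset_iff, Finset.disjoint_left, forall_and,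
    and_comm]

lemma flipSign_mem_transversal {F : Finset α} {a : α × Bool} :
    flipSign a ∈ transversal F ↔ a ∉ transversal F := by
  obtain ⟨i, b⟩ := a
  cases b <;> by_cases hi : i ∈ F <;> simp [transversal, flipSign, hi]

lemma card_le_signedCount_iff {X : Finset (α × Bool)} {Y : Set (α × Bool)} :
    #X ≤ signedCount X Y ↔ ↑X ⊆ Y ∧ ∀ a ∈ X, flipSign a ∉ Y := by
  have := card_filter_le X (· ∈ Y)
  have hmem := card_filter_eq_iff (s := X) (p := (· ∈ Y))
  have hflip := card_filter_eq_zero_iff (s := X) (p := (flipSign · ∈ Y))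
  rw [signedCount, Set.subset_def]
  simp only [mem_coe]
  rw [← hmem, ← hflip]
  omega

lemma signedCount_transversal (X : Finset (α × Bool)) (F : Finset α) :
    signedCount X (transversal F) = #X - 2 * #{a ∈ X | a ∉ transversal F} := by
  have := card_filter_add_card_filter_not (s := X) (· ∈ transversal F)
  simp only [signedCount, flipSign_mem_transversal]
  omega

lemma exists_isBase_card_sub_one_le_signedCount [DecidableEq α] {M : Matroid (α × Bool)}
    {X : Finset (α × Bool)} {x : α × Bool} {B' : Set (α × Bool)}
    (hX : ∀ a ∈ insert x X, flipSign a ∉ insert x X) (hI : M.Indep ↑(insert x X))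
    (hB' : M.IsBase B') (hB'X : #X ≤ signedCount X B') :
    ∃ B, M.IsBase B ∧ #(insert x X) - 1 ≤ signedCount (insert x X) B := by
  obtain ⟨-, hflipB'⟩ := card_le_signedCount_iff.1 hB'X
  obtain ⟨B, hB, hXB, hBsub⟩ := hI.exists_isBase_subset_union_isBase hB'
  refine ⟨B, hB, ?_⟩
  have hmem : {a ∈ insert x X | a ∈ B} = insert x X := filter_true_of_mem fun a ha => hXB ha
  have hflip : {a ∈ insert x X | flipSign a ∈ B} ⊆ {x} := by
    intro a ha
    obtain ⟨ha, haB⟩ := mem_filter.1 ha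
    rcases mem_insert.1 ha with rfl | haX
    · exact mem_singleton_self a
    · rcases hBsub haB with h | h
      · exact absurd h (hX a ha)
      · exact absurd h (hflipB' a haX)
  have := card_le_card hflip
  rw [card_singleton] at this
  rw [signedCount, hmem]
  omega

end SignedGroundSet

lemma exists_le_of_subset_convexHull {𝕜 E : Type*} [Field 𝕜] [LinearOrder 𝕜]
    [IsStrictOrderedRing 𝕜] [AddCommGroup E] [Module 𝕜 E] {s t : Set E}
    (hst : s ⊆ convexHull 𝕜 t) (ℓ : E →ₗ[𝕜] 𝕜) {c : 𝕜} (h : ∃ x ∈ s, c ≤ ℓ x) :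
    ∃ y ∈ t, c ≤ ℓ y := by
  obtain ⟨x, hx, hcx⟩ := h
  obtain ⟨y, hy, hxy⟩ :=
    (ℓ.convexOn (convex_convexHull 𝕜 t)).exists_ge_of_mem_convexHull (subset_convexHull 𝕜 t)
      (hst hx)
  exact ⟨y, hy, hcx.trans hxy⟩

lemma exists_le_iff_of_convexHull_eq {𝕜 E : Type*} [Field 𝕜] [LinearOrder 𝕜]
    [IsStrictOrderedRing 𝕜] [AddCommGroup E] [Module 𝕜 E] {s t : Set E}
    (h : convexHull 𝕜 s = convexHull 𝕜 t) (ℓ : E →ₗ[𝕜] 𝕜) (c : 𝕜) :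
    (∃ x ∈ s, c ≤ ℓ x) ↔ ∃ y ∈ t, c ≤ ℓ y :=
  ⟨exists_le_of_subset_convexHull (h ▸ subset_convexHull 𝕜 s) ℓ,
    exists_le_of_subset_convexHull (h ▸ subset_convexHull 𝕜 t) ℓ⟩

def signedSum {α : Type*} (X : Finset (α × Bool)) : (α → ℝ) →ₗ[ℝ] ℝ where
  toFun y := ∑ a ∈ X, if a.2 then y a.1 else -y a.1
  map_add' y z := by
    simp only [Pi.add_apply, ← sum_add_distrib]
    refine sum_congr rfl fun a _ => ?_
    split_ifs <;> ring
  map_smul' r y := by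
    simp only [Pi.smul_apply, smul_eq_mul, RingHom.id_apply, mul_sum]
    refine sum_congr rfl fun a _ => ?_
    split_ifs <;> ring

section Envelope

open scoped Classical

variable {n : ℕ}

lemma isLinearMap_envMap : IsLinearMap ℝ (envMap (n := n)) where
  map_add x y := funext fun i => by simp only [envMap, Pi.add_apply]; ring
  map_smul r x := funext fun i => by simp only [envMap, Pi.smul_apply, smul_eq_mul]; ring

lemma signedSum_envMap_indicator (X : Finset (Fin n × Bool)) (Y : Set (Fin n × Bool)) :
    signedSum X (envMap (Y.indicator fun _ => 1)) = signedCount X Y := by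
  have hterm : ∀ a ∈ X, (if a.2 then envMap (Y.indicator fun _ => 1) a.1
      else -envMap (Y.indicator fun _ => 1) a.1)
      = (if a ∈ Y then (1 : ℝ) else 0) - if flipSign a ∈ Y then 1 else 0 := by
    rintro ⟨i, b⟩ -
    cases b <;> simp [envMap, flipSign, Set.indicator_apply]
  simp only [signedSum, LinearMap.coe_mk, AddHom.coe_mk, sum_congr rfl hterm, sum_sub_distrib,
    sum_boole, signedCount]
  push_cast
  rfl

lemma envMap_indicator_transversal (F : Finset (Fin n)) :
    envMap ((transversal F).indicator fun _ => 1) = fun i => if i ∈ F then 1 else -1 := by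
  funext i
  by_cases hi : i ∈ F <;> simp [envMap, transversal, hi]

namespace IsEnveloping

variable {D : DeltaMatroid n} {M : Matroid (Fin n × Bool)}

lemma convexHull_eq (hM : IsEnveloping M D) :
    convexHull ℝ (envMap '' {x | ∃ B, M.IsBase B ∧ x = B.indicator fun _ => 1})
      = convexHull ℝ ((fun F => envMap ((transversal F).indicator fun _ => 1)) '' D.feas) := by
  rw [← isLinearMap_envMap.image_convexHull, hM.2, deltaPolytope]
  simp only [envMap_indicator_transversal]

lemma exists_isBase_le_signedCount_iff (hM : IsEnveloping M D) (X : Finset (Fin n × Bool))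
    (c : ℤ) :
    (∃ B, M.IsBase B ∧ c ≤ signedCount X B) ↔ ∃ F ∈ D.feas, c ≤ signedCount X (transversal F) := by
  simpa [signedSum_envMap_indicator] using
    exists_le_iff_of_convexHull_eq hM.convexHull_eq (signedSum X) c

lemma exists_isBase_of_subset_transversal (hM : IsEnveloping M D) {X : Finset (Fin n × Bool)}
    {F : Finset (Fin n)} (hF : F ∈ D.feas) (hXF : ↑X ⊆ transversal F) :
    ∃ B, M.IsBase B ∧ #X ≤ signedCount X B := by
  refine (hM.exists_isBase_le_signedCount_iff X #X).2 ⟨F, hF, ?_⟩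
  rw [signedCount_transversal, filter_false_of_mem fun a ha => not_not.2 (hXF ha)]
  simp

lemma exists_subset_transversal_of_isBase (hM : IsEnveloping M D) {X : Finset (Fin n × Bool)}
    {B : Set (Fin n × Bool)} (hB : M.IsBase B) (hXB : #X - 1 ≤ signedCount X B) :
    ∃ F ∈ D.feas, ↑X ⊆ transversal F := by
  obtain ⟨F, hF, hXF⟩ := (hM.exists_isBase_le_signedCount_iff X (#X - 1)).1 ⟨B, hB, hXB⟩
  refine ⟨F, hF, fun a ha => ?_⟩
  by_contra haF
  have : 0 < #{a ∈ X | a ∉ transversal F} := card_pos.2 ⟨a, mem_filter.2 ⟨ha, haF⟩⟩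
  rw [signedCount_transversal] at hXF
  omega

theorem indep_iff (hM : IsEnveloping M D) {X : Finset (Fin n × Bool)}
    (hX : ∀ a ∈ X, flipSign a ∉ X) :
    M.Indep ↑X ↔ ∃ F ∈ D.feas, ↑X ⊆ transversal F := by
  refine ⟨fun hI => ?_, fun ⟨F, hF, hXF⟩ => ?_⟩
  · induction X using Finset.induction_on with
    | empty =>
      obtain ⟨F, hF⟩ := D.nonempty
      exact ⟨F, hF, by simp⟩
    | insert x X _ ih =>
      have hXsub : X ⊆ insert x X := subset_insert x X
      obtain ⟨F', hF', hXF'⟩ := ih (fun a ha h => hX a (hXsub ha) (hXsub h))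
        (hI.subset (coe_subset.2 hXsub))
      obtain ⟨B', hB', hB'X⟩ := hM.exists_isBase_of_subset_transversal hF' hXF'
      obtain ⟨B, hB, hBX⟩ := exists_isBase_card_sub_one_le_signedCount hX hI hB' hB'X
      exact hM.exists_subset_transversal_of_isBase hB hBX
  · obtain ⟨B, hB, hXB⟩ := hM.exists_isBase_of_subset_transversal hF hXF
    exact hB.indep.subset (card_le_signedCount_iff.1 hXB).1

end IsEnveloping

end Envelope

/-- **Proposition (independent sets of an enveloping matroid).** If `M` is an enveloping matroid
for `D`, then an admissible set `S = (Sp, Sn)` is independent in `M` (as the subset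
`Sp×{+} ∪ Sn×{−}` of `[n]×{+,−}`) if and only if `S` is independent in `D`. -/
theorem deltaMatroid_enveloping_indep (n : ℕ) (D : DeltaMatroid n)
    (M : Matroid (Fin n × Bool)) (hM : IsEnveloping M D)
    (Sp Sn : Finset (Fin n)) (hS : Disjoint Sp Sn) :
    M.Indep (((↑Sp : Set (Fin n)) ×ˢ ({true} : Set Bool))
        ∪ ((↑Sn : Set (Fin n)) ×ˢ ({false} : Set Bool)))
      ↔ ∃ F ∈ D.feas, Sp ⊆ F ∧ Disjoint Sn F := by
  simp only [← coe_signedSet, hM.indep_iff (flipSign_notMem_signedSet hS),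
    coe_signedSet_subset_transversal_iff]
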